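/- Let G be a group with automatic structures L₁ ⊆ A* for π₁ : A* → G and L₂ ⊆ B* for π₂ : B* → G, and let φ be an endomorphism of G such that the synchronous BRP holds for (φ, L₁, L₂). Then L₁ induces an automatic structure through φ; that is, L₁ is an automatic structure for the homomorphism π₁φ : A* → Gφ onto the image subgroup Gφ. -/
import Mathlib


open scoped NNReal

namespace Auto

/-- The generating set `Aπ ∪ (Aπ)⁻¹` of `G` determined by `π : A* → G`. -/
def gens {A G : Type*} [Group G] (π : FreeMonoid A →* G) : Set G :=
  (Set.range fun a : A => π (FreeMonoid.of a)) ∪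
    Set.range fun a : A => (π (FreeMonoid.of a))⁻¹

/-- The word metric `d_A` on `G`: the least `n` such that `g⁻¹h` is a product of `n`
elements of `Aπ ∪ (Aπ)⁻¹`. -/
noncomputable def wdist {A G : Type*} [Group G] (π : FreeMonoid A →* G) (g h : G) : ℕ :=
  sInf {n : ℕ | ∃ l : List G, l.length = n ∧ (∀ x ∈ l, x ∈ gens π) ∧ l.prod = g⁻¹ * h}

/-- Evaluation of a word of `A*` in `G`. -/
def evalW {A G : Type*} [Group G] (π : FreeMonoid A →* G) (w : List A) : G :=
  π (FreeMonoid.ofList w)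

/-- `u` and `v` `p`-fellow travel: `d_A(u^[n]π, v^[n]π) ≤ p` for all `n`. -/
def FellowTravel {A G : Type*} [Group G] (π : FreeMonoid A →* G) (p : ℝ≥0)
    (u v : List A) : Prop :=
  ∀ n : ℕ, (wdist π (evalW π (u.take n)) (evalW π (v.take n)) : ℝ≥0) ≤ p

/-- `u` and `v` are `p`-meeting-fellow-travellers. -/
def MFT {A G : Type*} [Group G] (π : FreeMonoid A →* G) (p : ℝ≥0) (u v : List A) : Prop :=
  FellowTravel π p u v ∧ evalW π u = evalW π v

/-- A language is regular if it is accepted by a finite-state automaton. -/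
def IsRegular {A : Type*} (L : Language A) : Prop :=
  ∃ (σ : Type) (_ : Fintype σ) (M : DFA A σ), M.accepts = L

/-- `L` is an automatic structure for `π`. -/
structure IsAutomaticStructure {A G : Type*} [Group G] (π : FreeMonoid A →* G)
    (L : Language A) : Prop where
  regular : IsRegular L
  onto : ∀ g : G, ∃ w ∈ L, evalW π w = g
  ft : ∃ N : ℕ, ∀ u ∈ L, ∀ v ∈ L,
    wdist π (evalW π u) (evalW π v) ≤ 1 → FellowTravel π N u v

/-- Evaluation of an element of `A ∪ {ε}`. -/
def evalOpt {A G : Type*} [Group G] (π : FreeMonoid A →* G) : Option A → G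
  | none => 1
  | some a => π (FreeMonoid.of a)

/-- `L` is a biautomatic structure for `π`. -/
structure IsBiautomaticStructure {A G : Type*} [Group G] (π : FreeMonoid A →* G)
    (L : Language A) extends IsAutomaticStructure π L : Prop where
  bi : ∃ N : ℕ, ∀ u ∈ L, ∀ v ∈ L, ∀ a : Option A,
    evalW π v = evalOpt π a * evalW π u →
    ∀ n : ℕ, wdist π (evalOpt π a * evalW π (u.take n)) (evalW π (v.take n)) ≤ N

/-- A language is factorial if it is closed under taking factors. -/
def IsFactorial {A : Type*} (L : Language A) : Prop :=
  ∀ u ∈ L, ∀ v : List A, v <:+: u → v ∈ L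

/-- `D : ℝ≥0 → ℝ≥0` is a departure function for `(G, L)`. -/
def IsDepartureFunction {A G : Type*} [Group G] (π : FreeMonoid A →* G) (L : Language A)
    (D : ℝ≥0 → ℝ≥0) : Prop :=
  ∀ w ∈ L, ∀ r : ℝ≥0, ∀ s t : ℕ, D r ≤ (t : ℝ≥0) → s + t ≤ w.length →
    r < (wdist π (evalW π (w.take s)) (evalW π (w.take (s + t))) : ℝ≥0)

/-- Every point of `S` is within distance `N` of `T`. -/
def NbhdIn {A G : Type*} [Group G] (π : FreeMonoid A →* G) (N : ℕ) (S T : Set G) : Prop :=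
  ∀ s ∈ S, ∃ t ∈ T, wdist π s t ≤ N

/-- The Hausdorff distance between `S` and `T` is at most `N`. -/
def HausdorffLE {A G : Type*} [Group G] (π : FreeMonoid A →* G) (N : ℕ)
    (S T : Set G) : Prop :=
  NbhdIn π N S T ∧ NbhdIn π N T S

/-- `H` is an `L`-quasiconvex subgroup of `G`. -/
def IsQuasiconvex {A G : Type*} [Group G] (π : FreeMonoid A →* G) (L : Language A)
    (H : Subgroup G) : Prop :=
  ∃ k : ℕ, ∀ h ∈ H, ∀ h' ∈ H, ∀ w ∈ L, h * evalW π w = h' →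
    ∀ n : ℕ, ∃ z ∈ H, wdist π (h * evalW π (w.take n)) z ≤ k

/-- The bounded reduction property for `(φ, L, L')`. -/
def BRP {A B G G' : Type*} [Group G] [Group G'] (π : FreeMonoid A →* G)
    (π' : FreeMonoid B →* G') (φ : G →* G') (L : Language A) (L' : Language B) : Prop :=
  ∃ N : ℕ, ∀ x : G, ∀ α ∈ L, ∀ β ∈ L', evalW π' β = φ (evalW π α) →
    HausdorffLE π' N (Set.range fun n : ℕ => φ (x * evalW π (α.take n)))
      (Set.range fun n : ℕ => φ x * evalW π' (β.take n))

/-- The synchronous bounded reduction property for `(φ, L, L')`. -/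
def SyncBRP {A B G G' : Type*} [Group G] [Group G'] (π : FreeMonoid A →* G)
    (π' : FreeMonoid B →* G') (φ : G →* G') (L : Language A) (L' : Language B) : Prop :=
  ∃ N : ℕ, ∀ x : G, ∀ α ∈ L, ∀ β ∈ L', evalW π' β = φ (evalW π α) →
    ∀ n : ℕ, wdist π' (φ (x * evalW π (α.take n))) (φ x * evalW π' (β.take n)) ≤ N

/-- The fellow traveller bounded reduction property (FT-BRP) for `(φ, L, L')`. -/
def FTBRP {A B G G' : Type*} [Group G] [Group G'] (π : FreeMonoid A →* G)
    (π' : FreeMonoid B →* G') (φ : G →* G') (L : Language A) (L' : Language B) : Prop :=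
  ∀ p : ℝ≥0, ∃ q : ℝ≥0,
    ∀ u₁ ∈ L, ∀ u₂ ∈ L, ∀ u₃ ∈ L, ∀ u₁' ∈ L', ∀ u₂' ∈ L', ∀ u₃' ∈ L',
      evalW π' u₁' = φ (evalW π u₁) → evalW π' u₂' = φ (evalW π u₂) →
        evalW π' u₃' = φ (evalW π u₃) →
          MFT π p (u₁ ++ u₂) u₃ → MFT π' q (u₁' ++ u₂') u₃'

/-- The natural homomorphism `(A ⊔ B)* → G` agreeing with `π₁` on `A` and `π₂` on `B`. -/
def sumHom {A B G : Type*} [Group G] (π₁ : FreeMonoid A →* G) (π₂ : FreeMonoid B →* G) :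
    FreeMonoid (A ⊕ B) →* G :=
  FreeMonoid.lift (Sum.elim (fun a => π₁ (FreeMonoid.of a)) fun b => π₂ (FreeMonoid.of b))

/-- The union `L₁ ∪ L₂` viewed as a language over `A ⊔ B`. -/
def unionLang {A B : Type*} (L₁ : Language A) (L₂ : Language B) : Language (A ⊕ B) :=
  {w : List (A ⊕ B) | (∃ u ∈ L₁, w = u.map Sum.inl) ∨ ∃ v ∈ L₂, w = v.map Sum.inr}

/-- `L` is an asynchronous automatic structure for `π`. -/
def IsAsyncAutomaticStructure {A G : Type*} [Group G] (π : FreeMonoid A →* G)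
    (L : Language A) : Prop :=
  IsRegular L ∧ (∀ g : G, ∃ w ∈ L, evalW π w = g) ∧
    ∃ p : ℕ, ∀ u ∈ L, ∀ v ∈ L, wdist π (evalW π u) (evalW π v) ≤ 1 →
      ∃ φ ψ : ℕ → ℕ, Monotone φ ∧ Monotone ψ ∧
        Function.Surjective φ ∧ Function.Surjective ψ ∧
          ∀ t : ℕ, wdist π (evalW π (u.take (φ t))) (evalW π (v.take (ψ t))) ≤ p

/-- `L₁` and `L₂` are equivalent automatic structures. -/
def LangEquivalent {A B G : Type*} [Group G] (π₁ : FreeMonoid A →* G)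
    (π₂ : FreeMonoid B →* G) (L₁ : Language A) (L₂ : Language B) : Prop :=
  IsAsyncAutomaticStructure (sumHom π₁ π₂) (unionLang L₁ L₂)

/-- `L₁` and `L₂` are synchronously equivalent automatic structures. -/
def LangSyncEquivalent {A B G : Type*} [Group G] (π₁ : FreeMonoid A →* G)
    (π₂ : FreeMonoid B →* G) (L₁ : Language A) (L₂ : Language B) : Prop :=
  IsAutomaticStructure (sumHom π₁ π₂) (unionLang L₁ L₂)

/-- `L` has the Hausdorff closeness property. -/
def HausClose {A G : Type*} [Group G] (π : FreeMonoid A →* G) (L : Language A) : Prop :=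
  ∃ N : ℕ, ∀ u ∈ L, ∀ v ∈ L, wdist π (evalW π u) (evalW π v) ≤ 1 →
    HausdorffLE π N (Set.range fun n : ℕ => evalW π (u.take n))
      (Set.range fun n : ℕ => evalW π (v.take n))

/-- The padded alphabet `C = (A×B) ∪ (A×{$}) ∪ ({$}×B)` of convolution. -/
abbrev ConvAlphabet (A B : Type*) := (A × B) ⊕ (A ⊕ B)

/-- The convolution `u ⋄ v` of two words. -/
def conv {A B : Type*} : List A → List B → List (ConvAlphabet A B)
  | [], [] => []
  | [], b :: v => Sum.inr (Sum.inr b) :: conv [] v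
  | a :: u, [] => Sum.inr (Sum.inl a) :: conv u []
  | a :: u, b :: v => Sum.inl (a, b) :: conv u v
  termination_by u v => u.length + v.length

/-- The convolution `L₁ ⋄ L₂` of two languages. -/
def convLang {A B : Type*} (L₁ : Language A) (L₂ : Language B) :
    Language (ConvAlphabet A B) :=
  {w : List (ConvAlphabet A B) | ∃ u ∈ L₁, ∃ v ∈ L₂, w = conv u v}

/-- The natural homomorphism `C* → G × G'` for the convolution alphabet. -/
def convHom {A B G G' : Type*} [Group G] [Group G'] (π₁ : FreeMonoid A →* G)
    (π₂ : FreeMonoid B →* G') : FreeMonoid (ConvAlphabet A B) →* G × G' :=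
  FreeMonoid.lift fun c =>
    match c with
    | Sum.inl (a, b) => (π₁ (FreeMonoid.of a), π₂ (FreeMonoid.of b))
    | Sum.inr (Sum.inl a) => (π₁ (FreeMonoid.of a), 1)
    | Sum.inr (Sum.inr b) => (1, π₂ (FreeMonoid.of b))

/-- A group is automatic if it admits an automatic structure over some finite alphabet. -/
def IsAutomaticGroup (G : Type*) [Group G] : Prop :=
  ∃ (A : Type) (_ : Fintype A) (π : FreeMonoid A →* G) (L : Language A),
    IsAutomaticStructure π L

end Auto

open Auto

section Aux
namespace Auto

variable {A G : Type*} [Group G] {π : FreeMonoid A →* G}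

lemma evalW_eq_prod (π : FreeMonoid A →* G) (w : List A) :
    evalW π w = (w.map fun a => π (FreeMonoid.of a)).prod := by
  induction w with
  | nil => simp [evalW]
  | cons a t ih =>
      have : FreeMonoid.ofList (a :: t) = FreeMonoid.of a * FreeMonoid.ofList t := rfl
      simp [evalW, this, map_mul] at *
      simp [ih]

lemma gens_inv {x : G} (hx : x ∈ gens π) : x⁻¹ ∈ gens π := by
  rcases hx with ⟨a, rfl⟩ | ⟨a, rfl⟩
  · exact Or.inr ⟨a, rfl⟩
  · exact Or.inl ⟨a, by simp⟩

lemma wdist_le {g h : G} {n : ℕ} (l : List G) (hlen : l.length = n)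
    (hmem : ∀ x ∈ l, x ∈ gens π) (hprod : l.prod = g⁻¹ * h) : wdist π g h ≤ n :=
  Nat.sInf_le ⟨l, hlen, hmem, hprod⟩

lemma wdist_set_nonempty (hπ : Function.Surjective π) (g h : G) :
    {n : ℕ | ∃ l : List G, l.length = n ∧ (∀ x ∈ l, x ∈ gens π) ∧ l.prod = g⁻¹ * h}.Nonempty := by
  obtain ⟨w, hw⟩ := hπ (g⁻¹ * h)
  refine ⟨(FreeMonoid.toList w).length, (FreeMonoid.toList w).map (fun a => π (FreeMonoid.of a)), by simp, ?_, ?_⟩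
  · intro x hx
    simp only [List.mem_map] at hx
    obtain ⟨a, _, rfl⟩ := hx
    exact Or.inl ⟨a, rfl⟩
  · rw [← evalW_eq_prod]
    simpa [evalW] using hw

lemma exists_wdist_list (hπ : Function.Surjective π) (g h : G) :
    ∃ l : List G, l.length = wdist π g h ∧ (∀ x ∈ l, x ∈ gens π) ∧ l.prod = g⁻¹ * h :=
  Nat.sInf_mem (wdist_set_nonempty hπ g h)

lemma wdist_mul_left (x g h : G) : wdist π (x * g) (x * h) = wdist π g h := by
  unfold wdist
  congr 1
  ext n
  simp [mul_assoc, mul_inv_rev]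

lemma wdist_triangle (hπ : Function.Surjective π) (g k h : G) :
    wdist π g h ≤ wdist π g k + wdist π k h := by
  obtain ⟨l₁, h₁, m₁, p₁⟩ := exists_wdist_list hπ g k
  obtain ⟨l₂, h₂, m₂, p₂⟩ := exists_wdist_list hπ k h
  refine wdist_le (l₁ ++ l₂) (by simp [h₁, h₂]) ?_ ?_
  · intro x hx; rcases List.mem_append.1 hx with hx | hx
    · exact m₁ x hx
    · exact m₂ x hx
  · rw [List.prod_append, p₁, p₂]; group

lemma wdist_symm (g h : G) : wdist π g h = wdist π h g := by
  have key : ∀ g h : G, ∀ n, (∃ l : List G, l.length = n ∧ (∀ x ∈ l, x ∈ gens π) ∧ l.prod = g⁻¹ * h) →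
      ∃ l : List G, l.length = n ∧ (∀ x ∈ l, x ∈ gens π) ∧ l.prod = h⁻¹ * g := by
    rintro g h n ⟨l, hlen, hmem, hprod⟩
    refine ⟨(l.map fun x => x⁻¹).reverse, by simp [hlen], ?_, ?_⟩
    · intro x hx
      simp only [List.mem_reverse, List.mem_map] at hx
      obtain ⟨y, hy, rfl⟩ := hx
      exact gens_inv (hmem y hy)
    · rw [← List.prod_inv_reverse, hprod]; group
  unfold wdist
  congr 1
  ext n
  exact ⟨key g h n, key h g n⟩

lemma wdist_gen {c : G} (hc : c ∈ gens π) : wdist π 1 c ≤ 1 :=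
  wdist_le [c] rfl (by simpa) (by simp)



lemma gens_finite [Fintype A] (π : FreeMonoid A →* G) : (gens π).Finite :=
  (Set.finite_range _).union (Set.finite_range _)

lemma finite_prods {S : Set G} (hS : S.Finite) : ∀ M : ℕ,
    {g : G | ∃ l : List G, l.length ≤ M ∧ (∀ x ∈ l, x ∈ S) ∧ l.prod = g}.Finite := by
  intro M
  induction M with
  | zero =>
      refine Set.Finite.subset (Set.finite_singleton 1) ?_
      rintro g ⟨l, hlen, -, rfl⟩
      simp at hlen
      simp [hlen]
  | succ M ih =>
      refine Set.Finite.subset ((Set.finite_singleton 1).union (hS.image2 (· * ·) ih)) ?_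
      rintro g ⟨l, hlen, hmem, rfl⟩
      cases l with
      | nil => simp
      | cons c t =>
          refine Or.inr (Set.mem_image2_of_mem (hmem c (by simp)) ?_)
          exact ⟨t, by simpa using hlen, fun x hx => hmem x (by simp [hx]), rfl⟩

lemma ball_finite [Fintype A] (hπ : Function.Surjective π) (M : ℕ) :
    {y : G | wdist π 1 y ≤ M}.Finite := by
  refine Set.Finite.subset (finite_prods (gens_finite π) M) ?_
  intro y hy
  obtain ⟨l, hlen, hmem, hprod⟩ := exists_wdist_list hπ 1 y
  exact ⟨l, hlen ▸ hy, hmem, by simpa using hprod⟩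



variable {B G : Type*} [Group G] {π₂ : FreeMonoid B →* G} {L₂ : Language B}

lemma wdist_one_mul_right (g c : G) : wdist π₂ g (g * c) = wdist π₂ 1 c := by
  simpa using wdist_mul_left g 1 c

lemma chain_ft (N₂ : ℕ)
    (honto : ∀ g : G, ∃ w ∈ L₂, evalW π₂ w = g)
    (hft : ∀ u ∈ L₂, ∀ v ∈ L₂, wdist π₂ (evalW π₂ u) (evalW π₂ v) ≤ 1 →
      FellowTravel π₂ N₂ u v)
    (hπ₂ : Function.Surjective π₂) :
    ∀ (l : List G), (∀ x ∈ l, x ∈ gens π₂) → ∀ β ∈ L₂, ∀ γ ∈ L₂,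
      evalW π₂ γ = evalW π₂ β * l.prod → ∀ n,
        wdist π₂ (evalW π₂ (β.take n)) (evalW π₂ (γ.take n)) ≤ (l.length + 1) * N₂ := by
  intro l
  induction l with
  | nil =>
      intro _ β hβ γ hγ heq n
      have h1 : wdist π₂ (evalW π₂ β) (evalW π₂ γ) ≤ 1 := by
        simp at heq
        rw [heq]
        exact le_trans (wdist_le [] rfl (by simp) (by simp)) (by norm_num)
      have := hft β hβ γ hγ h1 n
      have : wdist π₂ (evalW π₂ (β.take n)) (evalW π₂ (γ.take n)) ≤ N₂ := by exact_mod_cast this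
      simpa using this
  | cons c t ih =>
      intro hmem β hβ γ hγ heq n
      obtain ⟨δ, hδ, hδeq⟩ := honto (evalW π₂ β * c)
      have h1 : wdist π₂ (evalW π₂ β) (evalW π₂ δ) ≤ 1 := by
        rw [hδeq, wdist_one_mul_right]
        exact wdist_gen (hmem c (by simp))
      have hstep : wdist π₂ (evalW π₂ (β.take n)) (evalW π₂ (δ.take n)) ≤ N₂ := by
        exact_mod_cast hft β hβ δ hδ h1 n
      have hrest := ih (fun x hx => hmem x (by simp [hx])) δ hδ γ hγ
        (by rw [heq, hδeq, List.prod_cons, ← mul_assoc]) n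
      calc wdist π₂ (evalW π₂ (β.take n)) (evalW π₂ (γ.take n))
          ≤ wdist π₂ (evalW π₂ (β.take n)) (evalW π₂ (δ.take n)) +
            wdist π₂ (evalW π₂ (δ.take n)) (evalW π₂ (γ.take n)) := wdist_triangle hπ₂ _ _ _
        _ ≤ N₂ + (t.length + 1) * N₂ := add_le_add hstep hrest
        _ ≤ ((c :: t).length + 1) * N₂ := by simp [List.length_cons]; ring_nf; omega


lemma wdist_one_inv {A G : Type*} [Group G] {π : FreeMonoid A →* G} (x : G) :
    wdist π 1 x⁻¹ = wdist π 1 x := by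
  have h := wdist_mul_left (π := π) x⁻¹ x 1
  simp only [inv_mul_cancel, mul_one] at h
  rw [h]
  exact wdist_symm x 1

end Auto
end Aux


/-- If the synchronous BRP holds for `(φ, L₁, L₂)`, then `L₁` induces an
automatic structure through `φ`, i.e. `L₁` is an automatic structure for
`π₁φ : A* → Gφ`. -/
theorem syncbrp_induces_structure {A B G : Type*} [Fintype A] [Fintype B] [Group G]
    (π₁ : FreeMonoid A →* G) (hπ₁ : Function.Surjective π₁)
    (π₂ : FreeMonoid B →* G) (hπ₂ : Function.Surjective π₂)
    (L₁ : Language A) (L₂ : Language B)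
    (h₁ : IsAutomaticStructure π₁ L₁) (h₂ : IsAutomaticStructure π₂ L₂)
    (φ : G →* G) (hsync : SyncBRP π₁ π₂ φ L₁ L₂) :
    IsAutomaticStructure (φ.rangeRestrict.comp π₁) L₁ := by
  constructor
  · exact h₁.regular
  · intro g
    obtain ⟨x, hx⟩ := g.2
    obtain ⟨w, hw, hwe⟩ := h₁.onto x
    refine ⟨w, hw, Subtype.ext ?_⟩
    simp only [evalW, MonoidHom.comp_apply, MonoidHom.coe_rangeRestrict]
    rw [show π₁ (FreeMonoid.ofList w) = evalW π₁ w from rfl, hwe, hx]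
  · classical
    obtain ⟨Ns, hNs⟩ := hsync
    obtain ⟨N₂, hN₂⟩ := h₂.ft
    set π' := φ.rangeRestrict.comp π₁ with hπ'def
    have hπ'surj : Function.Surjective π' :=
      (MonoidHom.rangeRestrict_surjective φ).comp hπ₁
    have hcoe : ∀ w : List A, ((evalW π' w : φ.range) : G) = φ (evalW π₁ w) := by
      intro w; rfl
    set K : ℕ := Finset.univ.sup fun a : A => wdist π₂ 1 (φ (π₁ (FreeMonoid.of a))) with hKdef
    have hgens : ∀ c ∈ gens π', wdist π₂ 1 ((c : φ.range) : G) ≤ K := by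
      rintro c (⟨a, rfl⟩ | ⟨a, rfl⟩)
      · exact Finset.le_sup (f := fun a : A => wdist π₂ 1 (φ (π₁ (FreeMonoid.of a))))
          (Finset.mem_univ a)
      · rw [show (((π' (FreeMonoid.of a))⁻¹ : φ.range) : G) = (φ (π₁ (FreeMonoid.of a)))⁻¹ from rfl,
          wdist_one_inv]
        exact Finset.le_sup (f := fun a : A => wdist π₂ 1 (φ (π₁ (FreeMonoid.of a))))
          (Finset.mem_univ a)
    set M : ℕ := Ns + ((K + 1) * N₂ + Ns) with hMdef
    have Sfin : {y : G | wdist π₂ 1 y ≤ M}.Finite := ball_finite hπ₂ M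
    set C : ℕ := Sfin.toFinset.sup
      (fun y => if h : y ∈ φ.range then wdist π' 1 ⟨y, h⟩ else 0) with hCdef
    refine ⟨C, ?_⟩
    intro u hu v hv hdist n
    -- representatives in L₂
    obtain ⟨βu, hβu, hβue⟩ := h₂.onto (φ (evalW π₁ u))
    obtain ⟨βv, hβv, hβve⟩ := h₂.onto (φ (evalW π₁ v))
    -- distance between the two representatives is at most K
    have hK : wdist π₂ (evalW π₂ βu) (evalW π₂ βv) ≤ K := by
      obtain ⟨l, hlen, hmem, hprod⟩ := exists_wdist_list hπ'surj (evalW π' u) (evalW π' v)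
      rw [hβue, hβve]
      match l, hlen, hmem, hprod with
      | [], _, _, hprod =>
          have he : evalW π' u = evalW π' v := by
            have h1 : (evalW π' u)⁻¹ * evalW π' v = 1 := by simpa using hprod.symm
            exact (inv_mul_eq_one (a := evalW π' u) (b := evalW π' v)).mp h1
          have hφ : φ (evalW π₁ u) = φ (evalW π₁ v) := by rw [← hcoe, ← hcoe, he]
          rw [hφ]
          exact le_trans (wdist_le [] rfl (by simp) (by simp)) (Nat.zero_le K)
      | [c], _, hmem, hprod =>
          have hc : evalW π' u * c = evalW π' v := by
            have h1 : c = (evalW π' u)⁻¹ * evalW π' v := by simpa using hprod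
            rw [h1]; group
          have hφ : φ (evalW π₁ v) = φ (evalW π₁ u) * ((c : φ.range) : G) := by
            rw [← hcoe, ← hcoe, ← hc]
            rfl
          rw [hφ, wdist_one_mul_right]
          exact hgens c (hmem c (by simp))
      | c :: c' :: t, hlen, _, _ =>
          exfalso
          rw [← hlen] at hdist
          simp [List.length_cons] at hdist
    -- fellow travelling of the representatives
    obtain ⟨l₂, hl₂len, hl₂mem, hl₂prod⟩ := exists_wdist_list hπ₂ (evalW π₂ βu) (evalW π₂ βv)
    have hchain : wdist π₂ (evalW π₂ (βu.take n)) (evalW π₂ (βv.take n)) ≤ (K + 1) * N₂ := by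
      have := chain_ft N₂ h₂.onto hN₂ hπ₂ l₂ hl₂mem βu hβu βv hβv
        (by rw [hl₂prod]; group) n
      calc wdist π₂ (evalW π₂ (βu.take n)) (evalW π₂ (βv.take n))
          ≤ (l₂.length + 1) * N₂ := this
        _ ≤ (K + 1) * N₂ := by
            have : l₂.length ≤ K := hl₂len ▸ hK
            exact Nat.mul_le_mul_right _ (by omega)
    -- synchronous BRP with x = 1
    have hsu : wdist π₂ (φ (evalW π₁ (u.take n))) (evalW π₂ (βu.take n)) ≤ Ns := by
      have := hNs 1 u hu βu hβu hβue n
      simpa using this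
    have hsv : wdist π₂ (φ (evalW π₁ (v.take n))) (evalW π₂ (βv.take n)) ≤ Ns := by
      have := hNs 1 v hv βv hβv hβve n
      simpa using this
    -- combine
    have hM : wdist π₂ (φ (evalW π₁ (u.take n))) (φ (evalW π₁ (v.take n))) ≤ M := by
      calc wdist π₂ (φ (evalW π₁ (u.take n))) (φ (evalW π₁ (v.take n)))
          ≤ wdist π₂ (φ (evalW π₁ (u.take n))) (evalW π₂ (βu.take n)) +
            wdist π₂ (evalW π₂ (βu.take n)) (φ (evalW π₁ (v.take n))) :=
            wdist_triangle hπ₂ _ _ _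
        _ ≤ Ns + (wdist π₂ (evalW π₂ (βu.take n)) (evalW π₂ (βv.take n)) +
            wdist π₂ (evalW π₂ (βv.take n)) (φ (evalW π₁ (v.take n)))) := by
            refine add_le_add hsu ?_
            exact wdist_triangle hπ₂ _ (evalW π₂ (βv.take n)) _
        _ ≤ Ns + ((K + 1) * N₂ + Ns) := by
            refine add_le_add le_rfl (add_le_add hchain ?_)
            rw [wdist_symm]; exact hsv
    -- transfer to the subgroup metric
    set d : φ.range := (evalW π' (u.take n))⁻¹ * evalW π' (v.take n) with hddef
    have hdw : wdist π' (evalW π' (u.take n)) (evalW π' (v.take n)) = wdist π' 1 d := by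
      have := wdist_mul_left (π := π') (evalW π' (u.take n)) 1 d
      simp only [mul_one] at this
      rw [← this, hddef]
      congr 1
      group
    have hdcoe : ((d : φ.range) : G) =
        (φ (evalW π₁ (u.take n)))⁻¹ * φ (evalW π₁ (v.take n)) := by
      rw [hddef]; push_cast [hcoe]; rfl
    have hdball : ((d : φ.range) : G) ∈ Sfin.toFinset := by
      rw [Set.Finite.mem_toFinset]
      show wdist π₂ 1 ((d : φ.range) : G) ≤ M
      rw [hdcoe]
      have := wdist_mul_left (π := π₂) (φ (evalW π₁ (u.take n))) 1
        ((φ (evalW π₁ (u.take n)))⁻¹ * φ (evalW π₁ (v.take n)))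
      simp only [mul_one] at this
      rw [← this]
      have heq : φ (evalW π₁ (u.take n)) * ((φ (evalW π₁ (u.take n)))⁻¹ *
          φ (evalW π₁ (v.take n))) = φ (evalW π₁ (v.take n)) := by group
      rw [heq]
      exact hM
    have hfin : wdist π' 1 d ≤ C := by
      have hle : (if h : ((d : φ.range) : G) ∈ φ.range then
          wdist π' 1 ⟨((d : φ.range) : G), h⟩ else 0) ≤ C :=
        Finset.le_sup (f := fun y : G => if h : y ∈ φ.range then wdist π' 1 ⟨y, h⟩ else 0) hdball
      rw [dif_pos d.2] at hle
      simpa using hle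
    rw [hdw]
    exact_mod_cast hfin
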